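/- Let n ∈ ℕ and for t > 0 let P_t denote the Euclidean heat semigroup on ℝ^n, P_t h(y) = ∫_{ℝ^n} h(y + √t·z) dγ_n(z). Let f: ℝ^n → ℝ be a positive function (with suitable integrability and regularity so that P_T f is smooth and positive). Then for every T > 0 and every x ∈ ℝ^n, the Hamilton matrix inequality holds: −∇² log P_T f(x) ⪯ (1/T)·Id_n. -/

import Mathlib

open MeasureTheory

/-- The `k`-th partial derivative of a function on `ℝⁿ`. -/
noncomputable def pderiv' {n : ℕ} (f : (Fin n → ℝ) → ℝ) (k : Fin n) (x : Fin n → ℝ) : ℝ :=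
  fderiv ℝ f x (Pi.single k 1)

/-- The standard Gaussian measure `γₙ` on `ℝⁿ`. -/
noncomputable def stdGauss (n : ℕ) : Measure (Fin n → ℝ) :=
  volume.withDensity fun x =>
    ENNReal.ofReal ((2 * Real.pi) ^ (-(n : ℝ) / 2) * Real.exp (-(∑ i, x i ^ 2) / 2))

/-- The Euclidean heat semigroup `P_t h(y) = ∫ h(y + √t z) dγₙ(z)`. -/
noncomputable def heatSG {n : ℕ} (t : ℝ) (h : (Fin n → ℝ) → ℝ) (y : Fin n → ℝ) : ℝ :=
  ∫ z, h (y + Real.sqrt t • z) ∂(stdGauss n)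

/-- The Hessian matrix `∇²g(x)` of a function `g : ℝⁿ → ℝ`. -/
noncomputable def hessian {n : ℕ} (g : (Fin n → ℝ) → ℝ) (x : Fin n → ℝ) :
    Matrix (Fin n) (Fin n) ℝ :=
  Matrix.of fun i j => pderiv' (fun y => pderiv' g j y) i x

namespace Stmt16Aux

lemma deriv_nonneg_of_monotone {h : ℝ → ℝ} {d a : ℝ} (hm : Monotone h)
    (hd : HasDerivAt h d a) : 0 ≤ d := by
  have ht : Filter.Tendsto (slope h a) (nhdsWithin a (Set.Ioi a)) (nhds d) :=
    (hasDerivAt_iff_tendsto_slope.mp hd).mono_left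
      (nhdsWithin_mono a (fun t ht => ne_of_gt ht))
  refine ge_of_tendsto ht ?_
  filter_upwards [self_mem_nhdsWithin] with t (ht : a < t)
  rw [slope_def_field]
  exact div_nonneg (sub_nonneg.2 (hm ht.le)) (sub_nonneg.2 ht.le)

variable {n : ℕ}

lemma hasFDerivAt_pderiv' {g : (Fin n → ℝ) → ℝ} (hg : ContDiff ℝ (⊤ : ℕ∞) g)
    (j : Fin n) (x : Fin n → ℝ) :
    HasFDerivAt (fun y => fderiv ℝ g y (Pi.single j 1))
      ((fderiv ℝ (fderiv ℝ g) x).flip (Pi.single j 1)) x := by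
  have hdg : Differentiable ℝ (fderiv ℝ g) := (hg.fderiv_right (m := 1) (WithTop.coe_le_coe.mpr le_top)).differentiable one_ne_zero
  have := (hdg x).hasFDerivAt.clm_apply (hasFDerivAt_const (Pi.single j (1:ℝ)) x)
  simpa using this

lemma hessian_apply_eq {g : (Fin n → ℝ) → ℝ} (hg : ContDiff ℝ (⊤ : ℕ∞) g) (x : Fin n → ℝ)
    (i j : Fin n) :
    hessian g x i j = fderiv ℝ (fderiv ℝ g) x (Pi.single i 1) (Pi.single j 1) := by
  show pderiv' (fun y => pderiv' g j y) i x = _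
  simp only [pderiv']
  rw [(hasFDerivAt_pderiv' hg j x).fderiv]
  simp [ContinuousLinearMap.flip_apply]

lemma snd_nonneg {g : (Fin n → ℝ) → ℝ} (hg : ContDiff ℝ (⊤ : ℕ∞) g)
    (hcvx : ConvexOn ℝ Set.univ g) (x v : Fin n → ℝ) :
    0 ≤ fderiv ℝ (fderiv ℝ g) x v v := by
  have hd : ∀ y, HasFDerivAt g (fderiv ℝ g y) y :=
    fun y => (hg.differentiable (by simp) y).hasFDerivAt
  have hdg : Differentiable ℝ (fderiv ℝ g) := (hg.fderiv_right (m := 1) (WithTop.coe_le_coe.mpr le_top)).differentiable one_ne_zero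
  have hline : ∀ s : ℝ, HasDerivAt (fun s : ℝ => x + s • v) v s := by
    intro s
    simpa using ((hasDerivAt_id s).smul_const v).const_add x
  have hφ' : ∀ s, HasDerivAt (fun s : ℝ => g (x + s • v)) (fderiv ℝ g (x + s • v) v) s :=
    fun s => (hd (x + s • v)).comp_hasDerivAt s (hline s)
  have hψ : HasDerivAt (fun s : ℝ => fderiv ℝ g (x + s • v) v)
      (fderiv ℝ (fderiv ℝ g) x v v) 0 := by
    have h1 : HasFDerivAt (fderiv ℝ g) (fderiv ℝ (fderiv ℝ g) x) (x + (0:ℝ) • v) := by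
      simpa using (hdg x).hasFDerivAt
    have h2 := h1.comp_hasDerivAt 0 (hline 0)
    have h3 : HasDerivAt (fun _ : ℝ => v) (0 : Fin n → ℝ) 0 := hasDerivAt_const (0:ℝ) v
    have := h2.clm_apply h3
    simpa using this
  have hφc : ConvexOn ℝ Set.univ (fun s : ℝ => g (x + s • v)) := by
    have h := hcvx.comp_affineMap (AffineMap.lineMap (x : Fin n → ℝ) (x + v))
    have hfun : (fun s : ℝ => g (x + s • v)) =
        g ∘ (AffineMap.lineMap (x : Fin n → ℝ) (x + v)) := by
      funext s
      simp only [Function.comp_apply, AffineMap.lineMap_apply_module]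
      congr 1
      module
    rw [hfun]
    simpa using h
  have hmono : Monotone (deriv (fun s : ℝ => g (x + s • v))) := by
    have := hφc.monotoneOn_deriv (fun s _ => (hφ' s).differentiableAt)
    exact monotoneOn_univ.mp this
  have hderiv : deriv (fun s : ℝ => g (x + s • v)) = fun s : ℝ => fderiv ℝ g (x + s • v) v :=
    funext fun s => (hφ' s).deriv
  exact deriv_nonneg_of_monotone (hderiv ▸ hmono) hψ

lemma hessian_posSemidef_of_convexOn {g : (Fin n → ℝ) → ℝ}
    (hg : ContDiff ℝ (⊤ : ℕ∞) g) (hcvx : ConvexOn ℝ Set.univ g) (x : Fin n → ℝ) :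
    (hessian g x).PosSemidef := by
  have hd : ∀ y, HasFDerivAt g (fderiv ℝ g y) y :=
    fun y => (hg.differentiable (by simp) y).hasFDerivAt
  have hdg : Differentiable ℝ (fderiv ℝ g) := (hg.fderiv_right (m := 1) (WithTop.coe_le_coe.mpr le_top)).differentiable one_ne_zero
  have hsymm := second_derivative_symmetric hd (hdg x).hasFDerivAt
  rw [Matrix.posSemidef_iff_dotProduct_mulVec]
  constructor
  · ext i j
    simp only [Matrix.conjTranspose_apply, star_trivial]
    rw [hessian_apply_eq hg x i j, hessian_apply_eq hg x j i, hsymm]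
  · intro v
    have hv : v = ∑ i, v i • (Pi.single i 1 : Fin n → ℝ) := by
      ext k
      simp [Pi.single_apply]
    have expand : fderiv ℝ (fderiv ℝ g) x v v =
        ∑ i, ∑ j, v i * (v j * fderiv ℝ (fderiv ℝ g) x (Pi.single i 1) (Pi.single j 1)) := by
      conv_lhs => rw [hv]
      simp only [map_sum, _root_.map_smul, ContinuousLinearMap.sum_apply,
        ContinuousLinearMap.smul_apply, smul_eq_mul, Finset.mul_sum]
      rw [Finset.sum_comm]
      exact Finset.sum_congr rfl fun i _ => Finset.sum_congr rfl fun j _ => by ring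
    have hform : dotProduct (star v) ((hessian g x).mulVec v)
        = fderiv ℝ (fderiv ℝ g) x v v := by
      rw [expand]
      simp only [dotProduct, star_trivial, Matrix.mulVec]
      refine Finset.sum_congr rfl fun i _ => ?_
      rw [Finset.mul_sum]
      refine Finset.sum_congr rfl fun j _ => ?_
      rw [hessian_apply_eq hg x i j]
      ring
    show 0 ≤ dotProduct (star v) ((hessian g x).mulVec v)
    rw [hform]
    exact snd_nonneg hg hcvx x v


noncomputable def projCLM {n : ℕ} (i : Fin n) : (Fin n → ℝ) →L[ℝ] ℝ :=
  ContinuousLinearMap.proj i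

lemma hasFDerivAt_sq_sum (c : ℝ) (y : Fin n → ℝ) :
    HasFDerivAt (fun w : Fin n → ℝ => c * ∑ i, w i ^ 2)
      (c • ∑ i, (2 * y i) • projCLM (n := n) i) y := by
  have h1 : ∀ i : Fin n, HasFDerivAt (fun w : Fin n → ℝ => w i ^ 2)
      ((2 * y i) • projCLM (n := n) i) y := by
    intro i
    have hp : HasFDerivAt (fun w : Fin n → ℝ => w i) (projCLM (n := n) i) y := by
      exact (projCLM (n := n) i).hasFDerivAt
    have h2 : (fun w : Fin n → ℝ => w i ^ 2) = fun w => w i * w i := by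
      funext w; ring
    rw [h2, two_mul, add_smul]
    exact hp.mul hp
  exact (HasFDerivAt.fun_sum (fun i _ => h1 i)).const_mul c

lemma pderiv'_quad {T : ℝ} (hT : 0 < T) (j : Fin n) (y : Fin n → ℝ) :
    pderiv' (fun w => (1/(2*T)) * ∑ i, w i ^ 2) j y = y j / T := by
  rw [pderiv', (hasFDerivAt_sq_sum (1/(2*T)) y).fderiv]
  simp only [ContinuousLinearMap.smul_apply, ContinuousLinearMap.sum_apply,
    projCLM, ContinuousLinearMap.proj_apply, Pi.single_apply, smul_eq_mul,
    mul_ite, mul_one, mul_zero]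
  rw [Finset.sum_ite_eq' Finset.univ j (fun i => 2 * y i)]
  simp only [Finset.mem_univ, if_true]
  field_simp

open Real ENNReal Filter

noncomputable def rhoR (n : ℕ) (z : Fin n → ℝ) : ℝ :=
  (2 * Real.pi) ^ (-(n : ℝ) / 2) * Real.exp (-(∑ i, z i ^ 2) / 2)

noncomputable def rho (n : ℕ) (z : Fin n → ℝ) : ℝ≥0∞ := ENNReal.ofReal (rhoR n z)

noncomputable def Gfun {n : ℕ} (f : (Fin n → ℝ) → ℝ) (st : ℝ) (z : Fin n → ℝ) : ℝ≥0∞ :=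
  rho n z * ENNReal.ofReal (f (st • z))

noncomputable def Efun {n : ℕ} (st : ℝ) (w z : Fin n → ℝ) : ℝ≥0∞ :=
  ENNReal.ofReal (Real.exp ((∑ i, z i * w i) / st))

noncomputable def Phi {n : ℕ} (f : (Fin n → ℝ) → ℝ) (st : ℝ) (w : Fin n → ℝ) : ℝ≥0∞ :=
  ∫⁻ z, Gfun f st z * Efun st w z

variable {n : ℕ}

lemma rhoR_pos (z : Fin n → ℝ) : 0 < rhoR n z :=
  mul_pos (Real.rpow_pos_of_pos Real.two_pi_pos _) (Real.exp_pos _)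

lemma rho_meas : Measurable (rho n) := by
  have hcont : Continuous (rhoR n) :=
    continuous_const.mul (Real.continuous_exp.comp
      (((continuous_finset_sum _ fun i _ => (continuous_apply i).pow 2).neg).div_const 2))
  exact (ENNReal.continuous_ofReal.comp hcont).measurable

lemma Efun_meas (st : ℝ) (w : Fin n → ℝ) : Measurable (Efun st w) :=
  (ENNReal.continuous_ofReal.comp (Real.continuous_exp.comp
    ((continuous_finset_sum _ fun i _ => (continuous_apply i).mul continuous_const).div_const
      st))).measurable

lemma stdGauss_eq : stdGauss n = volume.withDensity (rho n) := rfl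

/-- change of variables: the key integral identity. -/
lemma key_identity (f : (Fin n → ℝ) → ℝ) (hfpos : ∀ y, 0 < f y) {T : ℝ} (hT : 0 < T)
    (hint : ∀ y : Fin n → ℝ, Integrable (fun z => f (y + Real.sqrt T • z)) (stdGauss n))
    (w : Fin n → ℝ) :
    ENNReal.ofReal (heatSG T f w) =
      ENNReal.ofReal (Real.exp (-((1/(2*T)) * ∑ i, w i ^ 2))) * Phi f (Real.sqrt T) w := by
  set st := Real.sqrt T with hstdef
  have hst : 0 < st := Real.sqrt_pos.mpr hT
  have hst2 : st * st = T := Real.mul_self_sqrt hT.le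
  have step1 : ENNReal.ofReal (heatSG T f w)
      = ∫⁻ z, ENNReal.ofReal (f (w + st • z)) ∂(stdGauss n) := by
    rw [heatSG]
    exact ofReal_integral_eq_lintegral_ofReal (hint w)
      (Eventually.of_forall fun z => (hfpos _).le)
  have step2 : (∫⁻ z, ENNReal.ofReal (f (w + st • z)) ∂(stdGauss n))
      = ∫⁻ z, rho n z * ENNReal.ofReal (f (w + st • z)) := by
    rw [stdGauss_eq, lintegral_withDensity_eq_lintegral_mul_non_measurable _ rho_meas
      (Eventually.of_forall fun z => ENNReal.ofReal_lt_top)]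
    rfl
  set a : Fin n → ℝ := (1/st) • w with hadef
  have step3 : (∫⁻ z, rho n z * ENNReal.ofReal (f (w + st • z)))
      = ∫⁻ z, rho n (z + -a) * ENNReal.ofReal (f (w + st • (z + -a))) :=
    (lintegral_add_right_eq_self (fun z => rho n z * ENNReal.ofReal (f (w + st • z))) (-a)).symm
  have harg : ∀ z : Fin n → ℝ, w + st • (z + -a) = st • z := by
    intro z
    ext k
    simp only [Pi.add_apply, Pi.smul_apply, Pi.neg_apply, smul_eq_mul, hadef]
    field_simp
    ring
  have hrho : ∀ z : Fin n → ℝ, rhoR n (z + -a) =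
      rhoR n z * Real.exp ((∑ i, z i * w i) / st) *
        Real.exp (-((1/(2*T)) * ∑ i, w i ^ 2)) := by
    intro z
    have hterm : ∀ i, (z i + -((1/st) * w i)) ^ 2
        = z i ^ 2 - (2/st) * (z i * w i) + (1/T) * w i ^ 2 := by
      intro i
      rw [← hst2]
      field_simp
      ring
    have hsum : ∑ i, (z i + -((1/st) * w i)) ^ 2
        = ∑ i, z i ^ 2 - (2/st) * ∑ i, z i * w i + (1/T) * ∑ i, w i ^ 2 := by
      rw [Finset.sum_congr rfl fun i _ => hterm i]
      rw [Finset.sum_add_distrib, Finset.sum_sub_distrib, ← Finset.mul_sum, ← Finset.mul_sum]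
    simp only [rhoR, Pi.add_apply, Pi.neg_apply, Pi.smul_apply, smul_eq_mul, hadef]
    rw [mul_assoc, mul_assoc, ← Real.exp_add, ← Real.exp_add, hsum]
    congr 2
    ring
  have step4 : (∫⁻ z, rho n (z + -a) * ENNReal.ofReal (f (w + st • (z + -a))))
      = ∫⁻ z, ENNReal.ofReal (Real.exp (-((1/(2*T)) * ∑ i, w i ^ 2))) *
          (Gfun f st z * Efun st w z) := by
    refine lintegral_congr fun z => ?_
    rw [harg z, rho, hrho z, Gfun, Efun, rho]
    rw [ENNReal.ofReal_mul (mul_nonneg (rhoR_pos z).le (Real.exp_nonneg _)),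
      ENNReal.ofReal_mul (rhoR_pos z).le]
    ring
  have step5 : (∫⁻ z, ENNReal.ofReal (Real.exp (-((1/(2*T)) * ∑ i, w i ^ 2))) *
          (Gfun f st z * Efun st w z))
      = ENNReal.ofReal (Real.exp (-((1/(2*T)) * ∑ i, w i ^ 2))) * Phi f st w :=
    lintegral_const_mul' _ _ ENNReal.ofReal_ne_top
  rw [step1, step2, step3, step4, step5]

lemma phi_eq (f : (Fin n → ℝ) → ℝ) (hfpos : ∀ y, 0 < f y) {T : ℝ} (hT : 0 < T)
    (hint : ∀ y : Fin n → ℝ, Integrable (fun z => f (y + Real.sqrt T • z)) (stdGauss n))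
    (w : Fin n → ℝ) :
    Phi f (Real.sqrt T) w =
      ENNReal.ofReal (Real.exp ((1/(2*T)) * ∑ i, w i ^ 2) * heatSG T f w) := by
  set q := (1/(2*T)) * ∑ i, w i ^ 2 with hq
  have h := key_identity f hfpos hT hint w
  calc Phi f (Real.sqrt T) w
      = (ENNReal.ofReal (Real.exp q) * ENNReal.ofReal (Real.exp (-q))) *
          Phi f (Real.sqrt T) w := by
        rw [← ENNReal.ofReal_mul (Real.exp_nonneg _), ← Real.exp_add, add_neg_cancel,
          Real.exp_zero, ENNReal.ofReal_one, one_mul]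
    _ = ENNReal.ofReal (Real.exp q) * ENNReal.ofReal (heatSG T f w) := by
        rw [mul_assoc, ← h]
    _ = ENNReal.ofReal (Real.exp q * heatSG T f w) := by
        rw [ENNReal.ofReal_mul (Real.exp_nonneg _)]





variable {n : ℕ}

lemma holder_key (f : (Fin n → ℝ) → ℝ) (hfpos : ∀ y, 0 < f y) {st : ℝ}
    (haef : AEMeasurable (fun z => f (st • z)) (volume : Measure (Fin n → ℝ)))
    {x y : Fin n → ℝ} {a b : ℝ} (ha : 0 < a) (hb : 0 < b) (hab : a + b = 1) :
    Phi f st (a • x + b • y) ≤ Phi f st x ^ a * Phi f st y ^ b := by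
  have hG : AEMeasurable (Gfun f st) volume :=
    rho_meas.aemeasurable.mul (ENNReal.measurable_ofReal.comp_aemeasurable haef)
  have hGne0 : ∀ z, Gfun f st z ≠ 0 := fun z =>
    mul_ne_zero (ENNReal.ofReal_pos.mpr (rhoR_pos z)).ne' (ENNReal.ofReal_pos.mpr (hfpos _)).ne'
  have hGtop : ∀ z, Gfun f st z ≠ ⊤ := fun z =>
    ENNReal.mul_ne_top ENNReal.ofReal_ne_top ENNReal.ofReal_ne_top
  have hpq : Real.HolderConjugate (1/a) (1/b) := by
    constructor
    · rw [one_div, inv_inv, one_div, inv_inv, inv_one]; exact hab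
    · positivity
    · positivity
  have hF1 : AEMeasurable (fun z => (Gfun f st z * Efun st x z) ^ a) volume :=
    ENNReal.continuous_rpow_const.measurable.comp_aemeasurable
      (hG.mul (Efun_meas st x).aemeasurable)
  have hF2 : AEMeasurable (fun z => (Gfun f st z * Efun st y z) ^ b) volume :=
    ENNReal.continuous_rpow_const.measurable.comp_aemeasurable
      (hG.mul (Efun_meas st y).aemeasurable)
  have hpoint : ∀ z, (Gfun f st z * Efun st x z) ^ a * (Gfun f st z * Efun st y z) ^ b
      = Gfun f st z * Efun st (a • x + b • y) z := by
    intro z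
    rw [ENNReal.mul_rpow_of_nonneg _ _ ha.le, ENNReal.mul_rpow_of_nonneg _ _ hb.le,
      mul_mul_mul_comm, ← ENNReal.rpow_add a b (hGne0 z) (hGtop z), hab, ENNReal.rpow_one]
    congr 1
    rw [Efun, Efun, Efun, ENNReal.ofReal_rpow_of_pos (Real.exp_pos _),
      ENNReal.ofReal_rpow_of_pos (Real.exp_pos _), ← Real.exp_mul, ← Real.exp_mul,
      ← ENNReal.ofReal_mul (Real.exp_nonneg _), ← Real.exp_add]
    congr 1
    have hs : ∑ i, z i * (a • x + b • y) i = a * ∑ i, z i * x i + b * ∑ i, z i * y i := by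
      rw [Finset.mul_sum, Finset.mul_sum, ← Finset.sum_add_distrib]
      refine Finset.sum_congr rfl fun i _ => ?_
      simp only [Pi.add_apply, Pi.smul_apply, smul_eq_mul]
      ring
    rw [hs]
    ring
  calc Phi f st (a • x + b • y)
      = ∫⁻ z, ((fun z => (Gfun f st z * Efun st x z) ^ a) *
          (fun z => (Gfun f st z * Efun st y z) ^ b)) z := by
        rw [Phi]
        refine lintegral_congr fun z => ?_
        simp only [Pi.mul_apply]
        exact (hpoint z).symm
    _ ≤ (∫⁻ z, ((Gfun f st z * Efun st x z) ^ a) ^ (1/a)) ^ (1/(1/a)) *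
        (∫⁻ z, ((Gfun f st z * Efun st y z) ^ b) ^ (1/b)) ^ (1/(1/b)) :=
        ENNReal.lintegral_mul_le_Lp_mul_Lq volume hpq hF1 hF2
    _ = Phi f st x ^ a * Phi f st y ^ b := by
        rw [one_div_one_div, one_div_one_div]
        congr 2
        · refine lintegral_congr fun z => ?_
          rw [← ENNReal.rpow_mul, mul_one_div_cancel ha.ne', ENNReal.rpow_one]
        · refine lintegral_congr fun z => ?_
          rw [← ENNReal.rpow_mul, mul_one_div_cancel hb.ne', ENNReal.rpow_one]

lemma convexOn_main (f : (Fin n → ℝ) → ℝ) (hfpos : ∀ y, 0 < f y) {T : ℝ} (hT : 0 < T)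
    (hint : ∀ y : Fin n → ℝ, Integrable (fun z => f (y + Real.sqrt T • z)) (stdGauss n))
    (hpos : ∀ y, 0 < heatSG T f y) :
    ConvexOn ℝ Set.univ
      (fun w : Fin n → ℝ => (1/(2*T)) * ∑ i, w i ^ 2 + Real.log (heatSG T f w)) := by
  set st := Real.sqrt T with hstdef
  have hst : 0 < st := Real.sqrt_pos.mpr hT
  have h0 := (hint 0).aemeasurable
  have h0' : AEMeasurable (fun z => f (st • z)) (stdGauss n) := by simpa using h0
  have hac : (volume : Measure (Fin n → ℝ)) ≪ stdGauss n := by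
    rw [stdGauss_eq]
    exact withDensity_absolutelyContinuous' rho_meas.aemeasurable
      (Filter.Eventually.of_forall fun z => (ENNReal.ofReal_pos.mpr (rhoR_pos z)).ne')
  have haef : AEMeasurable (fun z => f (st • z)) volume := h0'.mono' hac
  set Z : (Fin n → ℝ) → ℝ := fun w => Real.exp ((1/(2*T)) * ∑ i, w i ^ 2) * heatSG T f w
    with hZ
  have hZpos : ∀ w, 0 < Z w := fun w => mul_pos (Real.exp_pos _) (hpos w)
  have hlogZ : ∀ w, Real.log (Z w) = (1/(2*T)) * ∑ i, w i ^ 2 + Real.log (heatSG T f w) := by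
    intro w
    rw [hZ]
    rw [Real.log_mul (Real.exp_ne_zero _) (hpos w).ne', Real.log_exp]
  constructor
  · exact convex_univ
  · intro x _ y _ a b ha hb hab
    rcases eq_or_lt_of_le ha with rfl | ha'
    · have hb1 : b = 1 := by linarith
      subst hb1; simp
    rcases eq_or_lt_of_le hb with rfl | hb'
    · have ha1 : a = 1 := by linarith
      subst ha1; simp
    have hkey := holder_key f hfpos haef (x := x) (y := y) ha' hb' hab
    rw [phi_eq f hfpos hT hint, phi_eq f hfpos hT hint, phi_eq f hfpos hT hint,
      ENNReal.ofReal_rpow_of_pos (hZpos x), ENNReal.ofReal_rpow_of_pos (hZpos y),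
      ← ENNReal.ofReal_mul (Real.rpow_nonneg (hZpos x).le _)] at hkey
    have hrpos : 0 < Z x ^ a * Z y ^ b :=
      mul_pos (Real.rpow_pos_of_pos (hZpos x) a) (Real.rpow_pos_of_pos (hZpos y) b)
    have hreal : Z (a • x + b • y) ≤ Z x ^ a * Z y ^ b :=
      (ENNReal.ofReal_le_ofReal_iff hrpos.le).mp hkey
    have hlog : Real.log (Z (a • x + b • y)) ≤ a * Real.log (Z x) + b * Real.log (Z y) := by
      refine le_trans ((Real.log_le_log_iff (hZpos _) hrpos).mpr hreal) ?_
      rw [Real.log_mul (Real.rpow_pos_of_pos (hZpos x) a).ne'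
        (Real.rpow_pos_of_pos (hZpos y) b).ne', Real.log_rpow (hZpos x),
        Real.log_rpow (hZpos y)]
    simp only [smul_eq_mul]
    rw [← hlogZ, ← hlogZ, ← hlogZ]
    exact hlog

end Stmt16Aux

/-- **Hamilton's matrix inequality on `ℝⁿ`** (eq. (1.32)): for a positive function `f` with
suitable regularity, for every `T > 0` and every `x ∈ ℝⁿ`,
`−∇² log P_T f(x) ⪯ (1/T)·Idₙ`. -/
theorem stmt_16 {n : ℕ} (f : (Fin n → ℝ) → ℝ) (hfpos : ∀ y, 0 < f y)
    -- suitable integrability and regularity so that `P_T f` is smooth and positive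
    (hint : ∀ T : ℝ, 0 < T →
      ∀ y : Fin n → ℝ, Integrable (fun z => f (y + Real.sqrt T • z)) (stdGauss n))
    (hreg : ∀ T : ℝ, 0 < T → ContDiff ℝ (⊤ : ℕ∞) (heatSG T f : (Fin n → ℝ) → ℝ))
    (hpos : ∀ T : ℝ, 0 < T → ∀ y : Fin n → ℝ, 0 < heatSG T f y) :
    ∀ T : ℝ, 0 < T → ∀ x : Fin n → ℝ,
      ((1 / T) • (1 : Matrix (Fin n) (Fin n) ℝ) -
        -hessian (fun y => Real.log (heatSG T f y)) x).PosSemidef := by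
  intro T hT x
  classical
  set L : (Fin n → ℝ) → ℝ := fun y => Real.log (heatSG T f y) with hLdef
  have hLsmooth : ContDiff ℝ (⊤ : ℕ∞) L := (hreg T hT).log (fun y => (hpos T hT y).ne')
  set gT : (Fin n → ℝ) → ℝ :=
    fun w => (1/(2*T)) * ∑ i, w i ^ 2 + Real.log (heatSG T f w) with hgTdef
  have hqsmooth : ContDiff ℝ (⊤ : ℕ∞) (fun w : Fin n → ℝ => (1/(2*T)) * ∑ i, w i ^ 2) := by
    exact contDiff_const.mul
      (ContDiff.sum fun i _ => ((Stmt16Aux.projCLM (n := n) i).contDiff).pow 2)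
  have hgsmooth : ContDiff ℝ (⊤ : ℕ∞) gT := hqsmooth.add hLsmooth
  have hgcvx : ConvexOn ℝ Set.univ gT :=
    Stmt16Aux.convexOn_main f hfpos hT (hint T hT) (hpos T hT)
  have hPSD := Stmt16Aux.hessian_posSemidef_of_convexOn hgsmooth hgcvx x
  have hEq : (1 / T) • (1 : Matrix (Fin n) (Fin n) ℝ) - -hessian L x = hessian gT x := by
    ext i j
    have hM : ((1 / T) • (1 : Matrix (Fin n) (Fin n) ℝ) - -hessian L x) i j
        = (if i = j then 1/T else 0) + hessian L x i j := by
      simp [Matrix.sub_apply, Matrix.smul_apply, Matrix.one_apply, Matrix.neg_apply,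
        mul_ite, mul_one, mul_zero, sub_neg_eq_add]
    rw [hM]
    have hsplit : ∀ y, pderiv' gT j y = y j / T + pderiv' L j y := by
      intro y
      have hdq : DifferentiableAt ℝ (fun w : Fin n → ℝ => (1/(2*T)) * ∑ i, w i ^ 2) y :=
        hqsmooth.differentiable (by simp) y
      have hdL : DifferentiableAt ℝ L y := hLsmooth.differentiable (by simp) y
      have hadd : pderiv' gT j y
          = pderiv' (fun w : Fin n → ℝ => (1/(2*T)) * ∑ i, w i ^ 2) j y + pderiv' L j y := by
        simp only [pderiv', hgTdef]
        rw [fderiv_fun_add hdq hdL, ContinuousLinearMap.add_apply]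
      rw [hadd, Stmt16Aux.pderiv'_quad hT j y]
    have hfun : (fun y => pderiv' gT j y) = fun y => y j / T + pderiv' L j y :=
      funext hsplit
    show _ = pderiv' (fun y => pderiv' gT j y) i x
    rw [hfun]
    have hH1 : HasFDerivAt (fun y : Fin n → ℝ => y j / T)
        ((1/T) • Stmt16Aux.projCLM (n := n) j) x := by
      have hp : HasFDerivAt (fun w : Fin n → ℝ => w j) (Stmt16Aux.projCLM (n := n) j) x := by
        exact (Stmt16Aux.projCLM (n := n) j).hasFDerivAt
      have h2 : (fun y : Fin n → ℝ => y j / T) = fun y => (1/T) * y j := by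
        funext w; ring
      rw [h2]
      exact hp.const_mul (1/T)
    have hH2 := Stmt16Aux.hasFDerivAt_pderiv' hLsmooth j x
    have hadd2 := hH1.fun_add hH2
    show (if i = j then 1/T else 0) + hessian L x i j
        = fderiv ℝ (fun y : Fin n → ℝ => y j / T + fderiv ℝ L y (Pi.single j 1)) x
            (Pi.single i 1)
    rw [hadd2.fderiv, ContinuousLinearMap.add_apply, ContinuousLinearMap.smul_apply,
      ContinuousLinearMap.flip_apply, ← Stmt16Aux.hessian_apply_eq hLsmooth x i j]
    congr 1
    simp [Stmt16Aux.projCLM, Pi.single_apply, eq_comm]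
  rw [hEq]
  exact hPSD
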